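/- arXiv:1210.2621 — 2 statements merged into one kernel-verified Lean document; each statement's English description precedes it below -/
import Mathlib

section
/- For every integer ℓ ≥ 4 there exists a (4,ℓ)-crucial permutation of length 3ℓ. -/
/-!
Take `π = 1, 2l, 2l-1, …, l+3, 2l+1, 3, 2, l+2, l+1, …, 4, 3l, 3l-1, …, 2l+2`
(for `l = 4`: `1 8 7 9 3 2 6 5 4 12 11 10`). Its ascents `π p < π q`, `p < q`, all start at
position `1`, end in the last block, end at the entry `2l+1`, or go from `3, 2` into the block
`l+2, …, 4`; no three of them chain along an arithmetic progression, so `1234` is avoided.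
A decreasing arithmetic subsequence of length `l` has difference at most `3`, and for each such
difference it has to cross one of these ascents.
Appending `x ≤ 2l+2` prolongs the final block `3l, …, 2l+2` to a decreasing run of length `l`;
appending `x > 2l+2` turns the entries `1, 3, 4` at positions `1, l+1, 2l+1` into the
increasing progression `1, 3, 4, x` of difference `l`.
-/

/-- `π` (viewed as a 1-indexed function `ℕ → ℕ`) is a permutation of length `n`,
i.e. the values `π 1, π 2, …, π n` contain each of `1,…,n` exactly once. -/
def IsPermutation (n : ℕ) (π : ℕ → ℕ) : Prop :=
  (∀ i, 1 ≤ i → i ≤ n → 1 ≤ π i ∧ π i ≤ n) ∧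
  (∀ i j, 1 ≤ i → i ≤ n → 1 ≤ j → j ≤ n → π i = π j → i = j) ∧
  (∀ v, 1 ≤ v → v ≤ n → ∃ i, 1 ≤ i ∧ i ≤ n ∧ π i = v)

/-- `π` (of length `n`) has a strictly increasing arithmetic subsequence of length `k`,
i.e. an arithmetic occurrence of the pattern `1 2 … k`. -/
def HasArithInc (n k : ℕ) (π : ℕ → ℕ) : Prop :=
  ∃ i d : ℕ, 1 ≤ i ∧ 1 ≤ d ∧ i + (k - 1) * d ≤ n ∧
    ∀ j, j + 1 < k → π (i + j * d) < π (i + (j + 1) * d)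

/-- `π` (of length `n`) has a strictly decreasing arithmetic subsequence of length `k`,
i.e. an arithmetic occurrence of the pattern `k (k-1) … 1`. -/
def HasArithDec (n k : ℕ) (π : ℕ → ℕ) : Prop :=
  ∃ i d : ℕ, 1 ≤ i ∧ 1 ≤ d ∧ i + (k - 1) * d ≤ n ∧
    ∀ j, j + 1 < k → π (i + j * d) > π (i + (j + 1) * d)

/-- `π` (of length `n`) is `(k,l)`-anti-monotone: it avoids arithmetically
the patterns `1 2 … k` and `l (l-1) … 1`. -/
def AntiMonotone (n k l : ℕ) (π : ℕ → ℕ) : Prop :=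
  ¬ HasArithInc n k π ∧ ¬ HasArithDec n l π

/-- The extension of `π` (of length `n`) to the right by `x`: every entry `≥ x` is
increased by `1` and `x` is appended at the right end (position `n+1`). -/
def ExtendRight (n : ℕ) (π : ℕ → ℕ) (x : ℕ) : ℕ → ℕ :=
  fun i => if i = n + 1 then x else if x ≤ π i then π i + 1 else π i

/-- The extension of `π` to the left by `x`: every entry `≥ x` is increased by `1`
and `x` is prepended at the left end (position `1`). -/
def ExtendLeft (π : ℕ → ℕ) (x : ℕ) : ℕ → ℕ :=
  fun i => if i = 1 then x else if x ≤ π (i - 1) then π (i - 1) + 1 else π (i - 1)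

/-- `π` is a `(k,l)`-crucial permutation of length `n`. -/
def Crucial (n k l : ℕ) (π : ℕ → ℕ) : Prop :=
  IsPermutation n π ∧ AntiMonotone n k l π ∧
  ∀ x, 1 ≤ x → x ≤ n + 1 → ¬ AntiMonotone (n + 1) k l (ExtendRight n π x)

/-- `π` is a `(k,l)`-bicrucial permutation of length `n`. -/
def Bicrucial (n k l : ℕ) (π : ℕ → ℕ) : Prop :=
  Crucial n k l π ∧
  ∀ x, 1 ≤ x → x ≤ n + 1 → ¬ AntiMonotone (n + 1) k l (ExtendLeft π x)

open Set

theorem IsPermutation.of_bijOn {n : ℕ} {π : ℕ → ℕ} (h : BijOn π (Icc 1 n) (Icc 1 n)) :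
    IsPermutation n π := by
  refine ⟨fun i hi₁ hi₂ => h.mapsTo ⟨hi₁, hi₂⟩, fun i j hi₁ hi₂ hj₁ hj₂ hij =>
    h.injOn ⟨hi₁, hi₂⟩ ⟨hj₁, hj₂⟩ hij, fun v hv₁ hv₂ => ?_⟩
  obtain ⟨i, ⟨hi₁, hi₂⟩, hi⟩ := h.surjOn ⟨hv₁, hv₂⟩
  exact ⟨i, hi₁, hi₂, hi⟩

theorem hasArithInc_four {n i d : ℕ} {π : ℕ → ℕ} (hi : 1 ≤ i) (hd : 1 ≤ d) (hn : i + 3 * d ≤ n)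
    (h₀ : π i < π (i + d)) (h₁ : π (i + d) < π (i + 2 * d)) (h₂ : π (i + 2 * d) < π (i + 3 * d)) :
    HasArithInc n 4 π := by
  refine ⟨i, d, hi, hd, hn, fun j hj => ?_⟩
  obtain rfl | rfl | rfl : j = 0 ∨ j = 1 ∨ j = 2 := by omega
  · simpa using h₀
  · simpa [add_one_mul] using h₁
  · simpa [add_one_mul] using h₂

section ExtendRight

variable {n x i : ℕ} {π : ℕ → ℕ}

theorem extendRight_last : ExtendRight n π x (n + 1) = x := if_pos rfl

theorem extendRight_of_le (hi : i ≤ n) (hx : x ≤ π i) : ExtendRight n π x i = π i + 1 := by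
  simp [ExtendRight, hx, show i ≠ n + 1 by omega]

theorem extendRight_of_lt (hi : i ≤ n) (hx : π i < x) : ExtendRight n π x i = π i := by
  simp [ExtendRight, show ¬x ≤ π i by omega, show i ≠ n + 1 by omega]

end ExtendRight

def crucialPerm (l : ℕ) (p : ℕ) : ℕ :=
  if p = 1 then 1
  else if p ≤ l - 1 then 2 * l + 2 - p
  else if p = l then 2 * l + 1
  else if p = l + 1 then 3
  else if p = l + 2 then 2
  else if p ≤ 2 * l + 1 then 2 * l + 5 - p
  else 5 * l + 2 - p

def crucialPermInv (l : ℕ) (v : ℕ) : ℕ :=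
  if v = 1 then 1
  else if v = 2 then l + 2
  else if v = 3 then l + 1
  else if v ≤ l + 2 then 2 * l + 5 - v
  else if v ≤ 2 * l then 2 * l + 2 - v
  else if v = 2 * l + 1 then l
  else 5 * l + 2 - v

namespace crucialPerm

variable {l : ℕ}

theorem bijOn : BijOn (crucialPerm l) (Icc 1 (3 * l)) (Icc 1 (3 * l)) := by
  refine InvOn.bijOn (f' := crucialPermInv l) ⟨fun p ⟨hp₁, hp₂⟩ => ?_, fun v ⟨hv₁, hv₂⟩ => ?_⟩
    (fun p ⟨hp₁, hp₂⟩ => ?_) (fun v ⟨hv₁, hv₂⟩ => ?_)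
  · unfold crucialPerm
    split_ifs <;> (unfold crucialPermInv; split_ifs <;> omega)
  · unfold crucialPermInv
    split_ifs <;> (unfold crucialPerm; split_ifs <;> omega)
  · rw [mem_Icc]
    unfold crucialPerm
    split_ifs <;> omega
  · rw [mem_Icc]
    unfold crucialPermInv
    split_ifs <;> omega

theorem isPermutation : IsPermutation (3 * l) (crucialPerm l) :=
  .of_bijOn bijOn

theorem lt_iff {p q : ℕ} (hp : 1 ≤ p) (hpq : p < q) (hq : q ≤ 3 * l) :
    crucialPerm l p < crucialPerm l q ↔
      p = 1 ∨ (p ≤ 2 * l + 1 ∧ 2 * l + 2 ≤ q) ∨ (2 ≤ p ∧ p ≤ l - 1 ∧ q = l) ∨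
        (l + 1 ≤ p ∧ p ≤ l + 2 ∧ l + 3 ≤ q ∧ q ≤ 2 * l + 1) := by
  unfold crucialPerm
  split_ifs <;> omega

theorem not_hasArithInc : ¬ HasArithInc (3 * l) 4 (crucialPerm l) := by
  rintro ⟨i, d, hi, hd, hlen, hinc⟩
  have ascent (j : ℕ) (hj : j < 3) := (lt_iff (p := i + j * d) (q := i + (j + 1) * d)
    (by nlinarith) (by nlinarith) (by nlinarith)).1 (hinc j (by omega))
  have h₀ := ascent 0 (by norm_num)
  have h₁ := ascent 1 (by norm_num)
  have h₂ := ascent 2 (by norm_num)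
  omega

theorem not_hasArithDec (hl : 4 ≤ l) : ¬ HasArithDec (3 * l) l (crucialPerm l) := by
  rintro ⟨i, d, hi, hd, hlen, hdec⟩
  have hd₃ : d ≤ 3 := by
    by_contra! hd₄
    have : (l - 1) * 4 ≤ (l - 1) * d := Nat.mul_le_mul_left _ hd₄
    omega
  have descent (j : ℕ) (hj : j + 1 < l) : ¬ (i + j * d = 1 ∨
      (i + j * d ≤ 2 * l + 1 ∧ 2 * l + 2 ≤ i + (j + 1) * d) ∨
      (2 ≤ i + j * d ∧ i + j * d ≤ l - 1 ∧ i + (j + 1) * d = l) ∨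
      (l + 1 ≤ i + j * d ∧ i + j * d ≤ l + 2 ∧ l + 3 ≤ i + (j + 1) * d ∧
        i + (j + 1) * d ≤ 2 * l + 1)) := by
    have : (j + 1) * d ≤ (l - 1) * d := Nat.mul_le_mul_right _ (by omega)
    rw [← lt_iff (by nlinarith) (by nlinarith) (by omega)]
    exact (hdec j hj).not_gt
  interval_cases d
  · rcases (by omega : i = 1 ∨ i ≤ l - 1 ∨ (l ≤ i ∧ i ≤ l + 2) ∨ l + 3 ≤ i) with h | h | h | h
    · exact descent 0 (by omega) (by omega)
    · exact descent (l - 1 - i) (by omega) (by omega)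
    · exact descent (l + 2 - i) (by omega) (by omega)
    · exact descent (2 * l + 1 - i) (by omega) (by omega)
  · exact descent ((l + 2 - i) / 2) (by omega) (by omega)
  · exact descent ((2 * l + 1 - i) / 3) (by omega) (by omega)

theorem antiMonotone (hl : 4 ≤ l) : AntiMonotone (3 * l) 4 l (crucialPerm l) :=
  ⟨not_hasArithInc, not_hasArithDec hl⟩

theorem hasArithDec_extendRight (hl : 1 ≤ l) {x : ℕ} (hx : x ≤ 2 * l + 2) :
    HasArithDec (3 * l + 1) l (ExtendRight (3 * l) (crucialPerm l) x) := by
  have last_block (p : ℕ) (hp₁ : 2 * l + 2 ≤ p) (hp₂ : p ≤ 3 * l) :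
      ExtendRight (3 * l) (crucialPerm l) x p = 5 * l + 3 - p := by
    have hp : crucialPerm l p = 5 * l + 2 - p := by
      unfold crucialPerm
      split_ifs <;> omega
    rw [extendRight_of_le hp₂ (by omega), hp]
    omega
  refine ⟨2 * l + 2, 1, by omega, le_rfl, by omega, fun j hj => ?_⟩
  simp only [mul_one]
  rw [last_block _ (by omega) (by omega)]
  rcases (by omega : j + 2 < l ∨ j + 2 = l) with hj | hj
  · rw [last_block _ (by omega) (by omega)]
    omega
  · rw [show 2 * l + 2 + (j + 1) = 3 * l + 1 by omega, extendRight_last]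
    omega

theorem hasArithInc_extendRight (hl : 2 ≤ l) {x : ℕ} (hx : 4 < x) :
    HasArithInc (3 * l + 1) 4 (ExtendRight (3 * l) (crucialPerm l) x) := by
  have value (p v : ℕ) (hp : p ≤ 3 * l) (hpv : crucialPerm l p = v) (hvx : v < x) :
      ExtendRight (3 * l) (crucialPerm l) x p = v :=
    hpv ▸ extendRight_of_lt hp (hpv ▸ hvx)
  have h₀ := value 1 1 (by omega) (by simp [crucialPerm]) (by omega)
  have h₁ := value (1 + l) 3 (by omega) (by unfold crucialPerm; split_ifs <;> omega) (by omega)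
  have h₂ := value (1 + 2 * l) 4 (by omega) (by unfold crucialPerm; split_ifs <;> omega) (by omega)
  have h₃ : ExtendRight (3 * l) (crucialPerm l) x (1 + 3 * l) = x := by
    rw [add_comm]
    exact extendRight_last
  exact hasArithInc_four (d := l) le_rfl (by omega) (by omega) (by omega) (by omega) (by omega)

theorem not_antiMonotone_extendRight (hl : 2 ≤ l) (x : ℕ) :
    ¬ AntiMonotone (3 * l + 1) 4 l (ExtendRight (3 * l) (crucialPerm l) x) := by
  rintro ⟨hinc, hdec⟩
  by_cases hx : x ≤ 2 * l + 2
  · exact hdec (hasArithDec_extendRight (by omega) hx)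
  · exact hinc (hasArithInc_extendRight hl (by omega))

end crucialPerm

/-- For every `l ≥ 4` there is a `(4,l)`-crucial permutation of length `3*l`. -/
theorem crucial_4_l (l : ℕ) (hl : 4 ≤ l) :
    ∃ π : ℕ → ℕ, Crucial (3 * l) 4 l π :=
  ⟨crucialPerm l, crucialPerm.isPermutation, crucialPerm.antiMonotone hl,
    fun x _ _ => crucialPerm.not_antiMonotone_extendRight (by omega) x⟩
end

section
/- For all integers k, ℓ with 5 ≤ k ≤ ℓ and every integer n ≥ 2ℓ(k−1), there exists a (k,ℓ)-bicrucial permutation of length n. -/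
/-!
The permutation is built from five blocks of positions whose values fill consecutive ranges, in
increasing order of values: the decreasing prefix `1, …, l-1`; the increasing "low plant" at
positions `n+1-jl`, `1 ≤ j < k`; the middle, ordered by bit reversal, which has no monotone
three-term arithmetic progression; the increasing "high plant" at positions `jl`; and the
decreasing suffix `n+2-l, …, n`. It is the rank function of the lexicographic key
(block, order inside the block), hence a permutation.

Along a monotone arithmetic progression the block index is monotone. In an increasing progression
of length `k`, the bound `n ≥ 2l(k-1)` forces the second term into the middle block or above and
the second-to-last term into the middle block or below, so three consecutive terms lie in the
middle, which bit reversal forbids; decreasing progressions of length `l` are trapped in the middle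
the same way. Appending `x` on the right completes the suffix (small `x`) or the low plant
(large `x`); prepending `x` completes the prefix or the high plant.
-/

open Finset

section RankPerm

variable {α : Type*} [LinearOrder α] {n p q : ℕ} {key : ℕ → α}

def rankPerm (n : ℕ) (key : ℕ → α) (p : ℕ) : ℕ :=
  #{q ∈ Icc 1 n | key q ≤ key p}

theorem rankPerm_lt_rankPerm_iff (hq : q ∈ Icc 1 n) :
    rankPerm n key p < rankPerm n key q ↔ key p < key q := by
  refine ⟨fun h => lt_of_not_ge fun hqp => h.not_ge ?_, fun h => card_lt_card ?_⟩
  · exact card_le_card fun r hr => by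
      simp only [mem_filter] at hr ⊢
      exact ⟨hr.1, hr.2.trans hqp⟩
  · refine ssubset_iff_of_subset (fun r hr => ?_) |>.2 ⟨q, ?_, ?_⟩
    · simp only [mem_filter] at hr ⊢
      exact ⟨hr.1, hr.2.trans h.le⟩
    · simp [hq]
    · simp [h]

theorem rankPerm_le_card {s : Finset ℕ} (hs : ∀ q ∈ Icc 1 n, key q ≤ key p → q ∈ s) :
    rankPerm n key p ≤ #s :=
  card_le_card fun q hq => hs q (mem_filter.1 hq).1 (mem_filter.1 hq).2

theorem card_le_rankPerm {s : Finset ℕ} (hs : ∀ q ∈ s, q ∈ Icc 1 n ∧ key q ≤ key p) :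
    #s ≤ rankPerm n key p :=
  card_le_card fun q hq => mem_filter.2 (hs q hq)

theorem isPermutation_rankPerm (hkey : Set.InjOn key (Set.Icc 1 n)) :
    IsPermutation n (rankPerm n key) := by
  have hbound : ∀ p ∈ Icc 1 n, rankPerm n key p ∈ Icc 1 n := fun p hp => by
    refine mem_Icc.2 ⟨?_, ?_⟩
    · simpa using card_le_rankPerm (s := {p}) (by simpa using hp)
    · simpa using rankPerm_le_card (s := Icc 1 n) (key := key) (p := p) fun q hq _ => hq
  have hinj : ∀ p ∈ Icc 1 n, ∀ q ∈ Icc 1 n, rankPerm n key p = rankPerm n key q → p = q :=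
    fun p hp q hq h => hkey (by simpa using hp) (by simpa using hq) <| le_antisymm
      (not_lt.1 fun hlt => h.not_gt ((rankPerm_lt_rankPerm_iff hp).2 hlt))
      (not_lt.1 fun hlt => h.not_lt ((rankPerm_lt_rankPerm_iff hq).2 hlt))
  refine ⟨fun p h1 h2 => by simpa using hbound p (by simp [h1, h2]),
    fun p q hp1 hp2 hq1 hq2 => hinj p (by simp [hp1, hp2]) q (by simp [hq1, hq2]),
    fun v hv1 hv2 => ?_⟩
  obtain ⟨p, hp, rfl⟩ := surj_on_of_inj_on_of_card_le (fun p _ => rankPerm n key p) hbound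
    (fun p q hp hq => hinj p hp q hq) le_rfl v (by simp [hv1, hv2])
  exact ⟨p, (mem_Icc.1 hp).1, (mem_Icc.1 hp).2, rfl⟩

end RankPerm

def bitRev : ℕ → ℕ → ℕ
  | 0, _ => 0
  | w + 1, p => p % 2 * 2 ^ w + bitRev w (p / 2)

theorem bitRev_lt (w p : ℕ) : bitRev w p < 2 ^ w := by
  induction w generalizing p with
  | zero => simp [bitRev]
  | succ w ih =>
    have := ih (p / 2)
    have := Nat.mod_lt p two_pos
    rw [bitRev, pow_succ]
    nlinarith

theorem bitRev_injOn (w : ℕ) : Set.InjOn (bitRev w) (Set.Iio (2 ^ w)) := by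
  induction w with
  | zero => intro p hp q hq _; simp_all
  | succ w ih =>
    intro p hp q hq h
    simp only [Set.mem_Iio, pow_succ] at hp hq
    have := bitRev_lt w (p / 2)
    have := bitRev_lt w (q / 2)
    simp only [bitRev] at h
    obtain ⟨hmod, hhalf⟩ : p % 2 = q % 2 ∧ bitRev w (p / 2) = bitRev w (q / 2) := by
      rcases Nat.mod_two_eq_zero_or_one p with h1 | h1 <;>
        rcases Nat.mod_two_eq_zero_or_one q with h2 | h2 <;> simp [h1, h2] at h <;> omega
    have := ih (by simp; omega) (by simp; omega) hhalf
    omega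

theorem bitRev_mid_lt_iff {w q d : ℕ} (hd : 0 < d) (h : q + 2 * d < 2 ^ w) :
    bitRev w q < bitRev w (q + d) ↔ bitRev w (q + 2 * d) < bitRev w (q + d) := by
  induction w generalizing q d with
  | zero => simp at h; omega
  | succ w ih =>
    rw [pow_succ] at h
    simp only [bitRev]
    rcases Nat.even_or_odd' d with ⟨e, rfl | rfl⟩
    · rw [show (q + 2 * e) / 2 = q / 2 + e by omega,
        show (q + 2 * (2 * e)) / 2 = q / 2 + 2 * e by omega,
        show (q + 2 * e) % 2 = q % 2 by omega, show (q + 2 * (2 * e)) % 2 = q % 2 by omega,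
        add_lt_add_iff_left, add_lt_add_iff_left]
      exact ih (by omega) (by omega)
    · have := bitRev_lt w (q / 2)
      have := bitRev_lt w ((q + (2 * e + 1)) / 2)
      have := bitRev_lt w ((q + 2 * (2 * e + 1)) / 2)
      rcases Nat.mod_two_eq_zero_or_one q with hq | hq
      · rw [show (q + (2 * e + 1)) % 2 = 1 by omega, show (q + 2 * (2 * e + 1)) % 2 = 0 by omega,
          hq]
        omega
      · rw [show (q + (2 * e + 1)) % 2 = 0 by omega, show (q + 2 * (2 * e + 1)) % 2 = 1 by omega,
          hq]
        omega

section Construction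

variable {k l n p q : ℕ}

/-- Blocks are numbered in the order of their values: `0` prefix, `1` low plant, `2` middle,
`3` high plant, `4` suffix. -/
def block (k l n p : ℕ) : ℕ :=
  if p < l then 0
  else if n + 2 ≤ p + l then 4
  else if l ∣ p ∧ p ≤ (k - 1) * l then 3
  else if l ∣ n + 1 - p ∧ n + 1 - p ≤ (k - 1) * l then 1
  else 2

def blockKey (k l n p : ℕ) : ℕ :=
  if block k l n p = 0 ∨ block k l n p = 4 then n - p
  else if block k l n p = 2 then bitRev n p
  else p

def key (k l n p : ℕ) : ℕ ×ₗ ℕ :=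
  toLex (block k l n p, blockKey k l n p)

def bicrucialPerm (k l n : ℕ) : ℕ → ℕ :=
  rankPerm n (key k l n)

theorem block_le_four : block k l n p ≤ 4 := by
  unfold block; split_ifs <;> omega

theorem block_eq_zero_iff : block k l n p = 0 ↔ p < l := by
  unfold block; split_ifs <;> simp_all

theorem block_eq_four_iff : block k l n p = 4 ↔ l ≤ p ∧ n + 2 ≤ p + l := by
  unfold block; split_ifs <;> simp_all

theorem block_eq_three_iff :
    block k l n p = 3 ↔ l ≤ p ∧ p + l < n + 2 ∧ l ∣ p ∧ p ≤ (k - 1) * l := by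
  unfold block; split_ifs <;> simp_all

theorem block_eq_one_iff (hn : 2 * ((k - 1) * l) ≤ n) :
    block k l n p = 1 ↔
      l ≤ p ∧ p + l < n + 2 ∧ l ∣ n + 1 - p ∧ n + 1 - p ≤ (k - 1) * l := by
  unfold block; split_ifs <;> simp_all; omega

theorem block_mul_eq_three (hn : 2 * ((k - 1) * l) ≤ n) {j : ℕ} (hj : 1 ≤ j)
    (hjk : j ≤ k - 1) : block k l n (j * l) = 3 := by
  have := Nat.le_mul_of_pos_left l hj
  have := Nat.mul_le_mul_right l hjk
  exact block_eq_three_iff.2 ⟨by omega, by omega, dvd_mul_left l j, by omega⟩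

theorem block_sub_mul_eq_one (hn : 2 * ((k - 1) * l) ≤ n) {j : ℕ} (hj : 1 ≤ j)
    (hjk : j ≤ k - 1) : block k l n (n + 1 - j * l) = 1 := by
  have := Nat.le_mul_of_pos_left l hj
  have := Nat.mul_le_mul_right l hjk
  refine (block_eq_one_iff hn).2 ⟨by omega, by omega, ?_, by omega⟩
  rw [show n + 1 - (n + 1 - j * l) = j * l by omega]
  exact dvd_mul_left l j

theorem key_lt_key_iff : key k l n p < key k l n q ↔
    block k l n p < block k l n q ∨
      block k l n p = block k l n q ∧ blockKey k l n p < blockKey k l n q :=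
  Prod.Lex.toLex_lt_toLex

theorem block_le_block_of_key_le (h : key k l n p ≤ key k l n q) :
    block k l n p ≤ block k l n q :=
  Prod.Lex.monotone_fst _ _ h

theorem key_lt_key_iff_of_rising (hpq : block k l n p = block k l n q)
    (hp : block k l n p = 1 ∨ block k l n p = 3) : key k l n p < key k l n q ↔ p < q := by
  have hq : block k l n q = 1 ∨ block k l n q = 3 := hpq ▸ hp
  simp only [key_lt_key_iff, hpq, lt_irrefl, false_or, true_and, blockKey]
  rw [if_neg (by omega), if_neg (by omega), if_neg (by omega), if_neg (by omega)]

theorem key_lt_key_iff_of_falling (hpq : block k l n p = block k l n q)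
    (hp : block k l n p = 0 ∨ block k l n p = 4) (hpn : p ≤ n) (hqn : q ≤ n) :
    key k l n p < key k l n q ↔ q < p := by
  have hq : block k l n q = 0 ∨ block k l n q = 4 := hpq ▸ hp
  simp only [key_lt_key_iff, hpq, lt_irrefl, false_or, true_and, blockKey, if_pos hq]
  omega

theorem key_lt_key_iff_of_middle (hp : block k l n p = 2) (hq : block k l n q = 2) :
    key k l n p < key k l n q ↔ bitRev n p < bitRev n q := by
  simp [key_lt_key_iff, blockKey, hp, hq]

theorem key_injOn : Set.InjOn (key k l n) (Set.Icc 1 n) := by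
  intro p hp q hq h
  simp only [Set.mem_Icc] at hp hq
  have hb : block k l n p = block k l n q := congrArg (fun x => (ofLex x).1) h
  have hk : blockKey k l n p = blockKey k l n q := congrArg (fun x => (ofLex x).2) h
  simp only [blockKey, ← hb] at hk
  split_ifs at hk
  · omega
  · exact bitRev_injOn n (Set.mem_Iio.2 (hp.2.trans_lt n.lt_two_pow_self))
      (Set.mem_Iio.2 (hq.2.trans_lt n.lt_two_pow_self)) hk
  · exact hk

end Construction

section Progressions

variable {k l n p i d : ℕ}

theorem key_mid_lt_iff {j : ℕ} (hd : 0 < d) (hn : i + (j + 2) * d ≤ n)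
    (h0 : block k l n (i + j * d) = 2) (h1 : block k l n (i + (j + 1) * d) = 2)
    (h2 : block k l n (i + (j + 2) * d) = 2) :
    key k l n (i + j * d) < key k l n (i + (j + 1) * d) ↔
      key k l n (i + (j + 2) * d) < key k l n (i + (j + 1) * d) := by
  rw [key_lt_key_iff_of_middle h0 h1, key_lt_key_iff_of_middle h2 h1]
  rw [show i + (j + 1) * d = i + j * d + d by ring]
  rw [show i + (j + 2) * d = i + j * d + 2 * d by ring] at hn ⊢
  exact bitRev_mid_lt_iff hd (hn.trans_lt n.lt_two_pow_self)

theorem block_le_block_of_increasing {m j j' : ℕ}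
    (hinc : ∀ j, j + 1 < m → key k l n (i + j * d) < key k l n (i + (j + 1) * d))
    (hjj' : j ≤ j') (hj' : j' < m) : block k l n (i + j * d) ≤ block k l n (i + j' * d) := by
  have hmono : StrictMonoOn (fun j => key k l n (i + j * d)) (Set.Iic (m - 1)) :=
    strictMonoOn_Iic_of_lt_succ fun j hj => by rw [Order.succ_eq_add_one]; exact hinc j (by omega)
  exact block_le_block_of_key_le
    (hmono.monotoneOn (Set.mem_Iic.2 (by omega)) (Set.mem_Iic.2 (by omega)) hjj')

theorem block_le_block_of_decreasing {m j j' : ℕ}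
    (hdec : ∀ j, j + 1 < m → key k l n (i + (j + 1) * d) < key k l n (i + j * d))
    (hjj' : j ≤ j') (hj' : j' < m) : block k l n (i + j' * d) ≤ block k l n (i + j * d) := by
  have hanti : StrictAntiOn (fun j => key k l n (i + j * d)) (Set.Iic (m - 1)) :=
    strictAntiOn_Iic_of_succ_lt fun j hj => by rw [Order.succ_eq_add_one]; exact hdec j (by omega)
  exact block_le_block_of_key_le
    (hanti.antitoneOn (Set.mem_Iic.2 (by omega)) (Set.mem_Iic.2 (by omega)) hjj')

theorem le_of_block_eq_three_of_add (h0 : block k l n p = 3) (h1 : block k l n (p + d) = 3)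
    (hd : 0 < d) : l ≤ d :=
  Nat.le_of_dvd hd <| (Nat.dvd_add_right (block_eq_three_iff.1 h0).2.2.1).1
    (block_eq_three_iff.1 h1).2.2.1

theorem le_of_block_eq_one_of_add (hn : 2 * ((k - 1) * l) ≤ n) (h0 : block k l n p = 1)
    (h1 : block k l n (p + d) = 1) (hd : 0 < d) : l ≤ d := by
  obtain ⟨-, -, hdvd0, -⟩ := (block_eq_one_iff hn).1 h0
  obtain ⟨-, hpd, hdvd1, -⟩ := (block_eq_one_iff hn).1 h1
  have h : n + 1 - p = n + 1 - (p + d) + d := by omega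
  exact Nat.le_of_dvd hd <| (Nat.dvd_add_right hdvd1).1 (h ▸ hdvd0)

/-- Jumping from the prefix to the low plant takes a step of about `n - kl ≥ (k-2)l`, too long
for `k` terms. -/
theorem not_prefix_lowPlant_start (hk : 5 ≤ k) (hn : 2 * ((k - 1) * l) ≤ n)
    (h0 : block k l n i = 0) (h1 : block k l n (i + d) = 1) (hend : i + (k - 1) * d ≤ n) :
    False := by
  have := block_eq_zero_iff.1 h0
  have := ((block_eq_one_iff hn).1 h1).2.2.2
  have := Nat.mul_le_mul_right l (show 4 ≤ k - 1 by omega)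
  have := Nat.mul_le_mul_right d (show 4 ≤ k - 1 by omega)
  omega

theorem not_highPlant_suffix_end (hk : 5 ≤ k) (hn : 2 * ((k - 1) * l) ≤ n) (hi : 1 ≤ i)
    (h3 : block k l n (i + (k - 2) * d) = 3) (h4 : block k l n (i + (k - 1) * d) = 4) : False := by
  have := (block_eq_three_iff.1 h3).2.2.2
  have := (block_eq_four_iff.1 h4).2
  have : (k - 2) * d + d = (k - 1) * d := by rw [← add_one_mul, show k - 2 + 1 = k - 1 by omega]
  have := Nat.mul_le_mul_right l (show 4 ≤ k - 1 by omega)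
  have := Nat.mul_le_mul_right d (show 3 ≤ k - 2 by omega)
  omega

theorem two_le_block_of_increasing (hk : 5 ≤ k) (hn : 2 * ((k - 1) * l) ≤ n) (hd : 0 < d)
    (hend : i + (k - 1) * d ≤ n) (hinc : key k l n i < key k l n (i + d)) :
    2 ≤ block k l n (i + d) := by
  by_contra h
  have := block_le_block_of_key_le hinc.le
  have := Nat.le_mul_of_pos_left d (show 0 < k - 1 by omega)
  rcases (show block k l n (i + d) = 0 ∨ block k l n i = 0 ∧ block k l n (i + d) = 1 ∨
      block k l n i = 1 ∧ block k l n (i + d) = 1 by omega) with h1 | ⟨h0, h1⟩ | ⟨h0, h1⟩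
  · have := (key_lt_key_iff_of_falling (by omega) (Or.inl (by omega)) (by omega) (by omega)).1 hinc
    omega
  · exact not_prefix_lowPlant_start hk hn h0 h1 hend
  · have := Nat.mul_le_mul_left (k - 1) (le_of_block_eq_one_of_add hn h0 h1 hd)
    have := ((block_eq_one_iff hn).1 h0).2.2.2
    omega

theorem block_le_two_of_increasing (hk : 5 ≤ k) (hn : 2 * ((k - 1) * l) ≤ n) (hi : 1 ≤ i)
    (hd : 0 < d) (hend : i + (k - 1) * d ≤ n)
    (hinc : key k l n (i + (k - 2) * d) < key k l n (i + (k - 1) * d)) :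
    block k l n (i + (k - 2) * d) ≤ 2 := by
  by_contra h
  have hsucc : i + (k - 1) * d = i + (k - 2) * d + d := by
    rw [add_assoc, ← add_one_mul, show k - 2 + 1 = k - 1 by omega]
  have := block_le_block_of_key_le hinc.le
  have := @block_le_four k l n (i + (k - 1) * d)
  rcases (show block k l n (i + (k - 2) * d) = 4 ∨ block k l n (i + (k - 2) * d) = 3 ∧
      block k l n (i + (k - 1) * d) = 4 ∨ block k l n (i + (k - 2) * d) = 3 ∧
      block k l n (i + (k - 1) * d) = 3 by omega) with h0 | ⟨h0, h1⟩ | ⟨h0, h1⟩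
  · have := (key_lt_key_iff_of_falling (by omega) (Or.inr h0) (by omega) hend).1 hinc
    omega
  · exact not_highPlant_suffix_end hk hn hi h0 h1
  · rw [hsucc] at h1
    have := Nat.mul_le_mul_left (k - 1) (le_of_block_eq_three_of_add h0 h1 hd)
    have := (block_eq_three_iff.1 h1).2.2.2
    omega

theorem not_key_increasing (hk : 5 ≤ k) (hn : 2 * ((k - 1) * l) ≤ n) (hi : 1 ≤ i) (hd : 0 < d)
    (hend : i + (k - 1) * d ≤ n)
    (hinc : ∀ j, j + 1 < k → key k l n (i + j * d) < key k l n (i + (j + 1) * d)) : False := by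
  have h1 : 2 ≤ block k l n (i + 1 * d) := by
    simpa using two_le_block_of_increasing hk hn hd hend (by simpa using hinc 0 (by omega))
  have h2 : block k l n (i + (k - 2) * d) ≤ 2 := block_le_two_of_increasing hk hn hi hd hend
    (by simpa [show k - 2 + 1 = k - 1 by omega] using hinc (k - 2) (by omega))
  have := block_le_block_of_increasing (j := 1) (j' := 1 + 1) hinc (by omega) (by omega)
  have := block_le_block_of_increasing (j := 1 + 1) (j' := 1 + 2) hinc (by omega) (by omega)
  have := block_le_block_of_increasing (j := 1 + 2) (j' := k - 2) hinc (by omega) (by omega)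
  have hmid := key_mid_lt_iff (j := 1) (k := k) (l := l) hd
    ((Nat.add_le_add_left (Nat.mul_le_mul_right d (by omega)) i).trans hend)
    (by omega) (by omega) (by omega)
  exact lt_asymm (hinc (1 + 1) (by omega)) (hmid.1 (hinc 1 (by omega)))

theorem block_le_two_of_decreasing (hl : 2 ≤ l) (hd : 0 < d) (hend : i + (l - 1) * d ≤ n)
    (hdec : key k l n (i + d) < key k l n i) : block k l n (i + d) ≤ 2 := by
  by_contra h
  have := block_le_block_of_key_le hdec.le
  have := Nat.le_mul_of_pos_right (l - 1) hd
  have : block k l n i ≠ 4 := fun h4 => by have := (block_eq_four_iff.1 h4).2; omega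
  have := @block_le_four k l n i
  have := (key_lt_key_iff_of_rising (q := i) (by omega) (Or.inr (by omega))).1 hdec
  omega

theorem two_le_block_of_decreasing (hl : 2 ≤ l) (hi : 1 ≤ i) (hd : 0 < d)
    (hdec : key k l n (i + (l - 1) * d) < key k l n (i + (l - 2) * d)) :
    2 ≤ block k l n (i + (l - 2) * d) := by
  by_contra h
  have hsucc : i + (l - 1) * d = i + (l - 2) * d + d := by
    rw [add_assoc, ← add_one_mul, show l - 2 + 1 = l - 1 by omega]
  have := block_le_block_of_key_le hdec.le
  have := Nat.le_mul_of_pos_right (l - 1) hd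
  have : block k l n (i + (l - 1) * d) ≠ 0 := fun h0 => by
    have := block_eq_zero_iff.1 h0; omega
  have := (key_lt_key_iff_of_rising (by omega) (Or.inl (by omega))).1 hdec
  omega

theorem not_key_decreasing (hl : 5 ≤ l) (hi : 1 ≤ i) (hd : 0 < d) (hend : i + (l - 1) * d ≤ n)
    (hdec : ∀ j, j + 1 < l → key k l n (i + (j + 1) * d) < key k l n (i + j * d)) : False := by
  have h1 : block k l n (i + 1 * d) ≤ 2 := by
    simpa using block_le_two_of_decreasing (by omega) hd hend (by simpa using hdec 0 (by omega))
  have h2 : 2 ≤ block k l n (i + (l - 2) * d) := two_le_block_of_decreasing (by omega) hi hd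
    (by simpa [show l - 2 + 1 = l - 1 by omega] using hdec (l - 2) (by omega))
  have := block_le_block_of_decreasing (j := 1) (j' := 1 + 1) hdec (by omega) (by omega)
  have := block_le_block_of_decreasing (j := 1 + 1) (j' := 1 + 2) hdec (by omega) (by omega)
  have := block_le_block_of_decreasing (j := 1 + 2) (j' := l - 2) hdec (by omega) (by omega)
  have hmid := key_mid_lt_iff (j := 1) (k := k) (l := l) hd
    ((Nat.add_le_add_left (Nat.mul_le_mul_right d (by omega)) i).trans hend)
    (by omega) (by omega) (by omega)
  exact lt_asymm (hdec 1 (by omega)) (hmid.2 (hdec (1 + 1) (by omega)))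

end Progressions

section Extensions

variable {π : ℕ → ℕ} {n m i d x : ℕ}

theorem hasArithInc_extendRight (hi : 1 ≤ i) (hd : 1 ≤ d) (hend : i + (m - 1) * d = n + 1)
    (hinc : ∀ j, j + 2 < m → π (i + j * d) < π (i + (j + 1) * d))
    (hx : ∀ j, j + 1 < m → π (i + j * d) < x) :
    HasArithInc (n + 1) m (ExtendRight n π x) := by
  have hval : ∀ j, j + 1 < m → ExtendRight n π x (i + j * d) = π (i + j * d) := by
    intro j hj
    have := Nat.mul_le_mul_right d (show j + 1 ≤ m - 1 by omega)
    have := add_one_mul j d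
    have := hx j hj
    simp only [ExtendRight]
    rw [if_neg (by omega), if_neg (by omega)]
  refine ⟨i, d, hi, hd, hend.le, fun j hj => ?_⟩
  rw [hval j hj]
  rcases (show j + 2 < m ∨ j + 2 = m by omega) with h | h
  · rw [hval (j + 1) (by omega)]
    exact hinc j h
  · rw [show i + (j + 1) * d = n + 1 by rw [← hend, show j + 1 = m - 1 by omega]]
    simpa [ExtendRight] using hx j hj

theorem hasArithDec_extendRight (hi : 1 ≤ i) (hd : 1 ≤ d) (hend : i + (m - 1) * d = n + 1)
    (hdec : ∀ j, j + 2 < m → π (i + (j + 1) * d) < π (i + j * d))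
    (hx : ∀ j, j + 1 < m → x ≤ π (i + j * d)) :
    HasArithDec (n + 1) m (ExtendRight n π x) := by
  have hval : ∀ j, j + 1 < m → ExtendRight n π x (i + j * d) = π (i + j * d) + 1 := by
    intro j hj
    have := Nat.mul_le_mul_right d (show j + 1 ≤ m - 1 by omega)
    have := add_one_mul j d
    simp only [ExtendRight]
    rw [if_neg (by omega), if_pos (hx j hj)]
  refine ⟨i, d, hi, hd, hend.le, fun j hj => ?_⟩
  rw [hval j hj]
  rcases (show j + 2 < m ∨ j + 2 = m by omega) with h | h
  · rw [hval (j + 1) (by omega)]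
    exact Nat.succ_lt_succ (hdec j h)
  · rw [show i + (j + 1) * d = n + 1 by rw [← hend, show j + 1 = m - 1 by omega]]
    simpa [ExtendRight] using Nat.lt_succ_of_le (hx j hj)

theorem hasArithInc_extendLeft (hd : 1 ≤ d) (hend : (m - 1) * d ≤ n)
    (hinc : ∀ j, 1 ≤ j → j + 1 < m → π (j * d) < π ((j + 1) * d))
    (hx : ∀ j, 1 ≤ j → j < m → x ≤ π (j * d)) :
    HasArithInc (n + 1) m (ExtendLeft π x) := by
  have hval : ∀ j, 1 ≤ j → j < m → ExtendLeft π x (1 + j * d) = π (j * d) + 1 := by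
    intro j hj hjm
    have := Nat.le_mul_of_pos_left d hj
    simp only [ExtendLeft]
    rw [if_neg (by omega), Nat.add_sub_cancel_left, if_pos (hx j hj hjm)]
  refine ⟨1, d, le_rfl, hd, by omega, fun j hj => ?_⟩
  rcases Nat.eq_zero_or_pos j with rfl | hj0
  · have h1 := hval 1 le_rfl hj
    simp only [zero_mul, add_zero, zero_add, one_mul] at h1 ⊢
    rw [h1]
    simpa [ExtendLeft] using Nat.lt_succ_of_le (hx 1 le_rfl hj)
  · rw [hval j hj0 (by omega), hval (j + 1) (by omega) hj]
    exact Nat.succ_lt_succ (hinc j hj0 hj)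

theorem hasArithDec_extendLeft (hd : 1 ≤ d) (hend : (m - 1) * d ≤ n)
    (hdec : ∀ j, 1 ≤ j → j + 1 < m → π ((j + 1) * d) < π (j * d))
    (hx : ∀ j, 1 ≤ j → j < m → π (j * d) < x) :
    HasArithDec (n + 1) m (ExtendLeft π x) := by
  have hval : ∀ j, 1 ≤ j → j < m → ExtendLeft π x (1 + j * d) = π (j * d) := by
    intro j hj hjm
    have := Nat.le_mul_of_pos_left d hj
    have := hx j hj hjm
    simp only [ExtendLeft]
    rw [if_neg (by omega), Nat.add_sub_cancel_left, if_neg (by omega)]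
  refine ⟨1, d, le_rfl, hd, by omega, fun j hj => ?_⟩
  rcases Nat.eq_zero_or_pos j with rfl | hj0
  · have h1 := hval 1 le_rfl hj
    simp only [zero_mul, add_zero, zero_add, one_mul] at h1 ⊢
    rw [h1]
    simpa [ExtendLeft] using hx 1 le_rfl hj
  · rw [hval j hj0 (by omega), hval (j + 1) (by omega) hj]
    exact hdec j hj0 hj

end Extensions

section BicrucialPerm

variable {k l n p : ℕ}

theorem bicrucialPerm_le_of_block_eq_zero (hp : block k l n p = 0) :
    bicrucialPerm k l n p ≤ l - 1 := by
  unfold bicrucialPerm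
  simpa using rankPerm_le_card (s := Icc 1 (l - 1)) fun q hq hqp => by
    have := block_eq_zero_iff.1 (Nat.le_zero.1 (hp ▸ block_le_block_of_key_le hqp))
    simp only [mem_Icc] at hq ⊢
    omega

theorem bicrucialPerm_le_of_block_eq_one (hn : 2 * ((k - 1) * l) ≤ n) (hp : block k l n p = 1) :
    bicrucialPerm k l n p ≤ n + 1 - l := by
  have := ((block_eq_one_iff hn).1 hp)
  unfold bicrucialPerm
  simpa using rankPerm_le_card (s := Icc 1 (n + 1 - l)) fun q hq hqp => by
    have := hp ▸ block_le_block_of_key_le hqp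
    have : block k l n q ≠ 4 := by omega
    rw [Ne, block_eq_four_iff] at this
    simp only [mem_Icc] at hq ⊢
    omega

theorem le_bicrucialPerm_of_block_eq_three (hl : 0 < l) (hp : block k l n p = 3) (hpn : p ≤ n) :
    l ≤ bicrucialPerm k l n p := by
  have hlp := (block_eq_three_iff.1 hp).1
  have hcard : #(insert p (Icc 1 (l - 1))) = l := by
    rw [card_insert_of_notMem (by simp; omega), Nat.card_Icc]; omega
  refine hcard.ge.trans (card_le_rankPerm fun q hq => ?_)
  rcases mem_insert.1 hq with rfl | hq
  · exact ⟨mem_Icc.2 ⟨by omega, hpn⟩, le_rfl⟩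
  · have hq := mem_Icc.1 hq
    refine ⟨mem_Icc.2 ⟨hq.1, by omega⟩, le_of_lt (key_lt_key_iff.2 (Or.inl ?_))⟩
    rw [hp, block_eq_zero_iff.2 (by omega)]
    omega

theorem le_bicrucialPerm_of_block_eq_four (hp : block k l n p = 4) (hpn : p ≤ n) :
    n + 2 - l ≤ bicrucialPerm k l n p := by
  have hlp := block_eq_four_iff.1 hp
  have hcard : #(insert p (Icc 1 (n + 1 - l))) = n + 2 - l := by
    rw [card_insert_of_notMem (by simp; omega), Nat.card_Icc]; omega
  refine hcard.ge.trans (card_le_rankPerm fun q hq => ?_)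
  rcases mem_insert.1 hq with rfl | hq
  · exact ⟨mem_Icc.2 ⟨by omega, hpn⟩, le_rfl⟩
  · have hq := mem_Icc.1 hq
    have : block k l n q ≠ 4 := fun h => by have := (block_eq_four_iff.1 h).2; omega
    refine ⟨mem_Icc.2 ⟨hq.1, by omega⟩, le_of_lt (key_lt_key_iff.2 (Or.inl ?_))⟩
    have := @block_le_four k l n q
    omega

theorem not_hasArithInc_bicrucialPerm (hk : 5 ≤ k) (hn : 2 * ((k - 1) * l) ≤ n) :
    ¬ HasArithInc n k (bicrucialPerm k l n) := by
  rintro ⟨i, d, hi, hd, hend, hinc⟩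
  refine not_key_increasing hk hn hi hd hend fun j hj =>
    (rankPerm_lt_rankPerm_iff ?_).1 (hinc j hj)
  have := Nat.mul_le_mul_right d (show j + 1 ≤ k - 1 by omega)
  exact mem_Icc.2 ⟨by omega, by omega⟩

theorem not_hasArithDec_bicrucialPerm (hl : 5 ≤ l) :
    ¬ HasArithDec n l (bicrucialPerm k l n) := by
  rintro ⟨i, d, hi, hd, hend, hdec⟩
  refine not_key_decreasing hl hi hd hend fun j hj =>
    (rankPerm_lt_rankPerm_iff ?_).1 (hdec j hj)
  have := Nat.mul_le_mul_right d (show j ≤ l - 1 by omega)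
  exact mem_Icc.2 ⟨by omega, by omega⟩

theorem hasArithDec_extendRight_bicrucialPerm {x : ℕ} (hl : 0 < l) (h2l : 2 * l ≤ n + 2)
    (hx : x + l ≤ n + 2) : HasArithDec (n + 1) l (ExtendRight n (bicrucialPerm k l n) x) := by
  have hsuffix : ∀ j, j + 1 < l → block k l n (n + 2 - l + j * 1) = 4 := fun j hj =>
    block_eq_four_iff.2 ⟨by omega, by omega⟩
  refine hasArithDec_extendRight (m := l) (i := n + 2 - l) (by omega) le_rfl (by omega) (fun j hj => ?_) fun j hj => ?_
  · refine (rankPerm_lt_rankPerm_iff (mem_Icc.2 ⟨by omega, by omega⟩)).2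
      ((key_lt_key_iff_of_falling ?_ (Or.inr (hsuffix (j + 1) (by omega))) (by omega)
        (by omega)).2 (by omega))
    rw [hsuffix j (by omega), hsuffix (j + 1) (by omega)]
  · exact (show x ≤ n + 2 - l by omega).trans
      (le_bicrucialPerm_of_block_eq_four (hsuffix j hj) (by omega))

theorem hasArithInc_extendRight_bicrucialPerm {x : ℕ} (hn : 2 * ((k - 1) * l) ≤ n) (hl : 0 < l)
    (hx1 : 1 ≤ x) (hx : n + 2 < x + l) : HasArithInc (n + 1) k (ExtendRight n (bicrucialPerm k l n) x) := by
  have hplant : ∀ j, j + 1 < k → block k l n (n + 1 - (k - 1) * l + j * l) = 1 := by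
    intro j hj
    have := Nat.mul_le_mul_right l (show j ≤ k - 1 by omega)
    rw [show n + 1 - (k - 1) * l + j * l = n + 1 - (k - 1 - j) * l by
      rw [Nat.sub_mul (k - 1) j l]; omega]
    exact block_sub_mul_eq_one hn (by omega) (by omega)
  refine hasArithInc_extendRight (m := k) (i := n + 1 - (k - 1) * l) (by omega) hl (by omega) (fun j hj => ?_) fun j hj =>
    (bicrucialPerm_le_of_block_eq_one hn (hplant j hj)).trans_lt (by omega)
  have := Nat.mul_le_mul_right l (show j + 1 + 1 ≤ k - 1 by omega)
  have := add_one_mul j l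
  have := add_one_mul (j + 1) l
  refine (rankPerm_lt_rankPerm_iff (mem_Icc.2 ⟨by omega, by omega⟩)).2
    ((key_lt_key_iff_of_rising ?_ (Or.inl (hplant j (by omega)))).2 (by omega))
  rw [hplant j (by omega), hplant (j + 1) (by omega)]

theorem hasArithDec_extendLeft_bicrucialPerm {x : ℕ} (hln : l ≤ n + 1) (hx : l ≤ x) :
    HasArithDec (n + 1) l (ExtendLeft (bicrucialPerm k l n) x) := by
  have hprefix : ∀ j, j < l → block k l n (j * 1) = 0 := fun j hj =>
    block_eq_zero_iff.2 (by omega)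
  refine hasArithDec_extendLeft le_rfl (by omega) (fun j hj hjl => ?_) fun j hj hjl =>
    (bicrucialPerm_le_of_block_eq_zero (hprefix j hjl)).trans_lt (by omega)
  refine (rankPerm_lt_rankPerm_iff (mem_Icc.2 ⟨by omega, by omega⟩)).2
    ((key_lt_key_iff_of_falling ?_ (Or.inl (hprefix (j + 1) (by omega))) (by omega)
      (by omega)).2 (by omega))
  rw [hprefix j (by omega), hprefix (j + 1) (by omega)]

theorem hasArithInc_extendLeft_bicrucialPerm {x : ℕ} (hn : 2 * ((k - 1) * l) ≤ n) (hl : 0 < l)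
    (hx : x < l) : HasArithInc (n + 1) k (ExtendLeft (bicrucialPerm k l n) x) := by
  have hplant : ∀ j, 1 ≤ j → j < k → block k l n (j * l) = 3 := fun j hj hjk =>
    block_mul_eq_three hn hj (by omega)
  have hle : ∀ j, j < k → j * l ≤ n := fun j hj =>
    (Nat.mul_le_mul_right l (show j ≤ k - 1 by omega)).trans (by omega)
  refine hasArithInc_extendLeft hl (by omega) (fun j hj hjk => ?_) fun j hj hjk =>
    hx.le.trans (le_bicrucialPerm_of_block_eq_three hl (hplant j hj hjk) (hle j hjk))
  refine (rankPerm_lt_rankPerm_iff (mem_Icc.2 ⟨by nlinarith, hle (j + 1) hjk⟩)).2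
    ((key_lt_key_iff_of_rising ?_ (Or.inr (hplant j hj (by omega)))).2 (by nlinarith))
  rw [hplant j hj (by omega), hplant (j + 1) (by omega) hjk]

end BicrucialPerm

/-- For `5 ≤ k ≤ l` and every `n ≥ 2*l*(k-1)`, there is a `(k,l)`-bicrucial
permutation of length `n`. -/
theorem bicrucial_exists_all_lengths (k l n : ℕ) (hk : 5 ≤ k) (hkl : k ≤ l)
    (hn : 2 * l * (k - 1) ≤ n) :
    ∃ π : ℕ → ℕ, Bicrucial n k l π := by
  have hn' : 2 * ((k - 1) * l) ≤ n := (by ring : 2 * l * (k - 1) = 2 * ((k - 1) * l)) ▸ hn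
  have h2l : 2 * l ≤ n := (Nat.le_mul_of_pos_right (2 * l) (by omega)).trans hn
  refine ⟨bicrucialPerm k l n, ⟨isPermutation_rankPerm key_injOn,
    ⟨not_hasArithInc_bicrucialPerm hk hn', not_hasArithDec_bicrucialPerm (hk.trans hkl)⟩,
    fun x hx1 _ hx => ?_⟩, fun x _ _ hx => ?_⟩
  · by_cases hxl : x + l ≤ n + 2
    · exact hx.2 (hasArithDec_extendRight_bicrucialPerm (by omega) (by omega) hxl)
    · exact hx.1 (hasArithInc_extendRight_bicrucialPerm hn' (by omega) hx1 (by omega))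
  · by_cases hxl : l ≤ x
    · exact hx.2 (hasArithDec_extendLeft_bicrucialPerm (by omega) hxl)
    · exact hx.1 (hasArithInc_extendLeft_bicrucialPerm hn' (by omega) (by omega))
end
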